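/- arXiv:1511.06198 — 2 statements merged into one kernel-verified Lean document; each statement's English description precedes it below -/
import Mathlib

section
/- For the correction factor c_{p,n} = ((n-1)/2 · B(1/2,(n-1)/2) · √(1 - p^{-2/(n-1)}))^{2/(n-1)}, the following hold uniformly over integers n ≥ 2 as p → ∞: (i) c_{p,n}/(((n-1)/2)B(1/2,(n-1)/2))^{2/(n-1)} → 1; (ii) b_{p,n} = (2/(n-1))p^{-2/(n-1)}c_{p,n} → 0; (iii) a_{p,n}/(1 - p^{-2/(n-1)}) → 1 where a_{p,n} = 1 - p^{-2/(n-1)}c_{p,n}; (iv) b_{p,n}/a_{p,n} → 0. -/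
open MeasureTheory ProbabilityTheory Real Set Filter

/-- The real Beta function. -/
noncomputable def betaFun (a b : ℝ) : ℝ := Real.Gamma a * Real.Gamma b / Real.Gamma (a + b)

/-- The Beta(a,b) distribution on ℝ. -/
noncomputable def betaMeasure (a b : ℝ) : Measure ℝ :=
  ((volume : Measure ℝ).restrict (Set.Ioo 0 1)).withDensity
    fun x => ENNReal.ofReal (x ^ (a - 1) * (1 - x) ^ (b - 1) / betaFun a b)

/-- The correction factor `c_{p,n}`. -/
noncomputable def cCorr (p n : ℕ) : ℝ :=
  ((((n:ℝ) - 1)/2) * betaFun (1/2) (((n:ℝ) - 1)/2) *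
      Real.sqrt (1 - (p:ℝ) ^ (-2/((n:ℝ) - 1)))) ^ (2/((n:ℝ) - 1))

/-- The centering constant `a_{p,n}`. -/
noncomputable def aConst (p n : ℕ) : ℝ := 1 - (p:ℝ) ^ (-2/((n:ℝ) - 1)) * cCorr p n

/-- The scaling constant `b_{p,n}`. -/
noncomputable def bConst (p n : ℕ) : ℝ :=
  (2/((n:ℝ) - 1)) * (p:ℝ) ^ (-2/((n:ℝ) - 1)) * cCorr p n

/-!
Put `m = (n-1)/2`, `q = log p` and `x = q/m`, so that `p^{-2/(n-1)} = e^{-x}` and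
`c = (K √(1 - e^{-x}))^{1/m}` with `K = m B(1/2, m)`. Log-convexity of `Γ` gives
`π m ≤ K² ≤ π (m + 1/2)`, i.e. `log K = (log m)/2 + O(1)`; together with
`log (1 - e^{-x}) = log x + O(x)` the `log m` terms cancel and `m log c = (log q)/2 + O(1 + x)`.
Since `x e^{-x}` and `x² e^{-x}` are `O(1 - e^{-x})`, every error is `O((1 + log q)/q)`,
uniformly in `m ≥ 1/2`.
-/

open Topology

theorem Real.Gamma_add_half_le_sqrt_mul_Gamma {s : ℝ} (hs : 0 < s) :
    Gamma (s + 1 / 2) ≤ √s * Gamma s := by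
  have hG := Gamma_pos_of_pos hs
  have h := Gamma_mul_add_mul_le_rpow_Gamma_mul_rpow_Gamma hs (by linarith : 0 < s + 1)
    one_half_pos one_half_pos (by norm_num)
  rw [Gamma_add_one hs.ne', mul_rpow hs.le hG.le, mul_left_comm, ← rpow_add hG] at h
  calc Gamma (s + 1 / 2) = Gamma (1 / 2 * s + 1 / 2 * (s + 1)) := by ring_nf
    _ ≤ _ := h
    _ = √s * Gamma s := by norm_num [sqrt_eq_rpow]

theorem betaFun_one_half (m : ℝ) : betaFun (1 / 2) m = √π * Gamma m / Gamma (m + 1 / 2) := by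
  rw [betaFun, Gamma_one_half_eq, add_comm]

theorem mul_betaFun_one_half_pos {m : ℝ} (hm : 0 < m) : 0 < m * betaFun (1 / 2) m := by
  rw [betaFun_one_half]
  have := Gamma_pos_of_pos hm
  have := Gamma_pos_of_pos (by linarith : 0 < m + 1 / 2)
  positivity

theorem pi_mul_le_sq_mul_betaFun_one_half {m : ℝ} (hm : 0 < m) :
    π * m ≤ (m * betaFun (1 / 2) m) ^ 2 := by
  have hG' := Gamma_pos_of_pos (by linarith : 0 < m + 1 / 2)
  have h := Gamma_add_half_le_sqrt_mul_Gamma hm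
  rw [betaFun_one_half, mul_div_assoc', div_pow, le_div_iff₀ (by positivity)]
  calc π * m * Gamma (m + 1 / 2) ^ 2 ≤ π * m * (√m * Gamma m) ^ 2 := by gcongr
    _ = (m * (√π * Gamma m)) ^ 2 := by
      rw [mul_pow, mul_pow, mul_pow, sq_sqrt hm.le, sq_sqrt pi_pos.le]; ring

theorem sq_mul_betaFun_one_half_le {m : ℝ} (hm : 0 < m) :
    (m * betaFun (1 / 2) m) ^ 2 ≤ π * (m + 1 / 2) := by
  have hG' := Gamma_pos_of_pos (by linarith : 0 < m + 1 / 2)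
  have h := Gamma_add_half_le_sqrt_mul_Gamma (by linarith : 0 < m + 1 / 2)
  rw [add_assoc, add_halves, Gamma_add_one hm.ne'] at h
  rw [betaFun_one_half, mul_div_assoc', div_pow, div_le_iff₀ (by positivity)]
  calc (m * (√π * Gamma m)) ^ 2 = π * (m * Gamma m) ^ 2 := by
        rw [mul_pow, mul_pow, mul_pow, sq_sqrt pi_pos.le]; ring
    _ ≤ π * (√(m + 1 / 2) * Gamma (m + 1 / 2)) ^ 2 := by gcongr
    _ = π * (m + 1 / 2) * Gamma (m + 1 / 2) ^ 2 := by
      rw [mul_pow, sq_sqrt (by linarith)]; ring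

theorem abs_log_mul_betaFun_one_half_sub_le {m : ℝ} (hm : 1 / 2 ≤ m) :
    |log (m * betaFun (1 / 2) m) - log m / 2| ≤ 1 := by
  have hm0 : 0 < m := by linarith
  have hlower := pi_mul_le_sq_mul_betaFun_one_half hm0
  have h2pi : 2 * π ≤ exp 2 := by
    have : exp 2 = exp 1 * exp 1 := by rw [← exp_add]; norm_num
    nlinarith [exp_one_gt_d9, pi_lt_d2]
  have hupper := (sq_mul_betaFun_one_half_le hm0).trans
    (by nlinarith [pi_pos] : π * (m + 1 / 2) ≤ exp 2 * m)
  have hlog : log (m * betaFun (1 / 2) m) - log m / 2 =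
      (log ((m * betaFun (1 / 2) m) ^ 2) - log m) / 2 := by
    rw [log_pow]; push_cast; ring
  rw [hlog, abs_le]
  constructor
  · have := log_le_log (by positivity) hlower
    rw [log_mul pi_pos.ne' hm0.ne'] at this
    linarith [log_nonneg (by linarith [pi_gt_three] : (1:ℝ) ≤ π)]
  · have := log_le_log (by nlinarith [pi_pos]) hupper
    rw [log_mul (exp_pos 2).ne' hm0.ne', log_exp] at this
    linarith

theorem Real.mul_exp_neg_le_one_sub_exp_neg (x : ℝ) : x * exp (-x) ≤ 1 - exp (-x) := by
  have h := mul_le_mul_of_nonneg_right (add_one_le_exp x) (exp_pos (-x)).le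
  rw [← exp_add, add_neg_cancel, exp_zero] at h
  linarith

theorem Real.sq_mul_exp_neg_le {x : ℝ} (hx : 0 ≤ x) :
    x ^ 2 * exp (-x) ≤ 2 * (1 - exp (-x)) := by
  have h := mul_le_mul_of_nonneg_right (quadratic_le_exp_of_nonneg hx) (exp_pos (-x)).le
  rw [← exp_add, add_neg_cancel, exp_zero] at h
  nlinarith [mul_exp_neg_le_one_sub_exp_neg x, exp_pos (-x)]

theorem Real.abs_log_one_sub_exp_neg_sub_log_le {x : ℝ} (hx : 0 < x) :
    |log (1 - exp (-x)) - log x| ≤ x := by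
  have hpos : 0 < 1 - exp (-x) := by linarith [exp_lt_one_iff.2 (neg_lt_zero.2 hx)]
  have hlower := log_le_log (by positivity) (mul_exp_neg_le_one_sub_exp_neg x)
  have hupper := log_le_log hpos (by linarith [add_one_le_exp (-x)] : 1 - exp (-x) ≤ x)
  rw [log_mul hx.ne' (exp_pos _).ne', log_exp] at hlower
  rw [abs_le]
  constructor <;> linarith

theorem Real.mul_neg_log_one_sub_exp_neg_le_one {x : ℝ} (hx : 0 < x) :
    x * -log (1 - exp (-x)) ≤ 1 := by
  have hpos : 0 < 1 - exp (-x) := by linarith [exp_lt_one_iff.2 (neg_lt_zero.2 hx)]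
  have hlog : -log (1 - exp (-x)) ≤ exp (-x) / (1 - exp (-x)) := by
    have h := log_le_sub_one_of_pos (inv_pos.2 hpos)
    have he : (1 - exp (-x))⁻¹ - 1 = exp (-x) / (1 - exp (-x)) := by field_simp; ring
    rwa [log_inv, he] at h
  calc x * -log (1 - exp (-x)) ≤ x * (exp (-x) / (1 - exp (-x))) := by gcongr
    _ = x * exp (-x) / (1 - exp (-x)) := by ring
    _ ≤ 1 := (div_le_one hpos).2 (mul_exp_neg_le_one_sub_exp_neg x)

theorem Real.abs_exp_sub_one_le_mul_one_add_exp (u : ℝ) : |exp u - 1| ≤ |u| * (1 + exp u) := by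
  rcases le_total 0 u with hu | hu
  · have h := mul_le_mul_of_nonneg_right (add_one_le_exp (-u)) (exp_pos u).le
    rw [← exp_add, neg_add_cancel, exp_zero] at h
    rw [abs_of_nonneg (by linarith [one_le_exp hu]), abs_of_nonneg hu]
    nlinarith
  · rw [abs_of_nonpos (by linarith [exp_le_one_iff.2 hu] : exp u - 1 ≤ 0), abs_of_nonpos hu]
    nlinarith [add_one_le_exp u, exp_pos u]

/-- `c_{p,n}` in the variables `m = (n-1)/2` and `t = p^{-1/m}`. -/
noncomputable def corrFactor (m t : ℝ) : ℝ := (m * betaFun (1 / 2) m * √(1 - t)) ^ m⁻¹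

section corrFactor

variable {m q t : ℝ}

theorem corrFactor_eq_exp (hm : 0 < m) (ht : t < 1) :
    corrFactor m t = exp ((log (m * betaFun (1 / 2) m) + log (1 - t) / 2) / m) := by
  have hK := mul_betaFun_one_half_pos hm
  have ht' : 0 < 1 - t := sub_pos.2 ht
  rw [corrFactor, rpow_def_of_pos (by positivity), log_mul hK.ne' (sqrt_pos.2 ht').ne',
    log_sqrt ht'.le, ← div_eq_mul_inv]

theorem corrFactor_le_exp_three (hm : 1 / 2 ≤ m) (ht0 : 0 ≤ t) (ht : t < 1) :
    corrFactor m t ≤ exp 3 := by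
  have hm0 : 0 < m := by linarith
  have hK := (abs_le.1 (abs_log_mul_betaFun_one_half_sub_le hm)).2
  have hlog : log (1 - t) ≤ 0 := log_nonpos (by linarith) (by linarith)
  rw [corrFactor_eq_exp hm0 ht, exp_le_exp, div_le_iff₀ hm0]
  linarith [log_le_sub_one_of_pos hm0]

theorem abs_corrFactor_div_rpow_sub_one_le (hm : 0 < m) (hq : 0 < q) :
    |corrFactor m (exp (-(q / m))) / (m * betaFun (1 / 2) m) ^ m⁻¹ - 1| ≤ 1 / q := by
  set x := q / m with hx
  have hx0 : 0 < x := div_pos hq hm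
  have ht : exp (-x) < 1 := exp_lt_one_iff.2 (neg_lt_zero.2 hx0)
  have hlog : log (1 - exp (-x)) ≤ 0 := log_nonpos (by linarith) (by linarith [exp_pos (-x)])
  have hratio : corrFactor m (exp (-x)) / (m * betaFun (1 / 2) m) ^ m⁻¹
      = exp (log (1 - exp (-x)) / (2 * m)) := by
    rw [corrFactor_eq_exp hm ht, rpow_def_of_pos (mul_betaFun_one_half_pos hm), ← exp_sub]
    congr 1
    field_simp
    ring
  have hv : log (1 - exp (-x)) / (2 * m) = x * log (1 - exp (-x)) / (2 * q) := by
    rw [hx]; field_simp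
  rw [hratio]
  calc |exp (log (1 - exp (-x)) / (2 * m)) - 1|
      ≤ |log (1 - exp (-x)) / (2 * m)| * (1 + exp (log (1 - exp (-x)) / (2 * m))) :=
        abs_exp_sub_one_le_mul_one_add_exp _
    _ ≤ |log (1 - exp (-x)) / (2 * m)| * 2 := by
        gcongr
        have : 0 ≤ 2 * m := by positivity
        linarith [exp_le_one_iff.2 (div_nonpos_of_nonpos_of_nonneg hlog this)]
    _ = x * -log (1 - exp (-x)) / q := by
        rw [hv, abs_of_nonpos (div_nonpos_of_nonpos_of_nonneg
          (mul_nonpos_of_nonneg_of_nonpos hx0.le hlog) (by linarith))]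
        field_simp
    _ ≤ 1 / q := by gcongr; exact mul_neg_log_one_sub_exp_neg_le_one hx0

theorem inv_mul_mul_corrFactor_div_one_sub_le (hm : 1 / 2 ≤ m) (hq : 0 < q) :
    m⁻¹ * exp (-(q / m)) * corrFactor m (exp (-(q / m))) / (1 - exp (-(q / m)))
      ≤ exp 3 / q := by
  set x := q / m with hx
  have hm0 : 0 < m := by linarith
  have hx0 : 0 < x := div_pos hq hm0
  have ht : exp (-x) < 1 := exp_lt_one_iff.2 (neg_lt_zero.2 hx0)
  have hc0 : 0 ≤ corrFactor m (exp (-x)) := by rw [corrFactor_eq_exp hm0 ht]; positivity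
  have hxt : x * exp (-x) / (1 - exp (-x)) ≤ 1 :=
    (div_le_one (by linarith)).2 (mul_exp_neg_le_one_sub_exp_neg x)
  calc m⁻¹ * exp (-x) * corrFactor m (exp (-x)) / (1 - exp (-x))
      = x * exp (-x) / (1 - exp (-x)) * corrFactor m (exp (-x)) / q := by
        rw [hx]; field_simp
    _ ≤ 1 * exp 3 / q := by
        gcongr
        exact corrFactor_le_exp_three hm (exp_pos _).le ht
    _ = exp 3 / q := by rw [one_mul]

theorem abs_log_mul_betaFun_add_half_log_le (hm : 1 / 2 ≤ m) (hq : 1 ≤ q) :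
    |log (m * betaFun (1 / 2) m) + log (1 - exp (-(q / m))) / 2|
      ≤ 1 + log q / 2 + q / m / 2 := by
  have hm0 : 0 < m := by linarith
  have hx0 : 0 < q / m := div_pos (by linarith) hm0
  have hK := abs_log_mul_betaFun_one_half_sub_le hm
  have hx := abs_log_one_sub_exp_neg_sub_log_le hx0
  have hsplit : log (m * betaFun (1 / 2) m) + log (1 - exp (-(q / m))) / 2
      = (log (m * betaFun (1 / 2) m) - log m / 2)
        + (log (1 - exp (-(q / m))) - log (q / m)) / 2 + log q / 2 := by
    rw [log_div (by linarith) hm0.ne']; ring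
  rw [hsplit, abs_le] at *
  constructor <;> linarith [log_nonneg hq]

theorem abs_one_sub_mul_corrFactor_div_sub_one_le (hm : 1 / 2 ≤ m) (hq : 1 ≤ q) :
    |(1 - exp (-(q / m)) * corrFactor m (exp (-(q / m)))) / (1 - exp (-(q / m))) - 1|
      ≤ (1 + exp 3) * (2 + log q) / q := by
  set x := q / m with hx
  set L := log (m * betaFun (1 / 2) m) + log (1 - exp (-x)) / 2 with hLdef
  have hm0 : 0 < m := by linarith
  have hq0 : 0 < q := by linarith
  have hx0 : 0 < x := div_pos hq0 hm0
  have ht : exp (-x) < 1 := exp_lt_one_iff.2 (neg_lt_zero.2 hx0)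
  have ht' : 0 < 1 - exp (-x) := by linarith
  have hL : |L| ≤ 1 + log q / 2 + x / 2 := abs_log_mul_betaFun_add_half_log_le hm hq
  have hc : corrFactor m (exp (-x)) = exp (x * L / q) := by
    rw [corrFactor_eq_exp hm0 ht, ← hLdef, hx]; field_simp
  have hc3 := corrFactor_le_exp_three hm (exp_pos _).le ht
  have h1c : |1 - corrFactor m (exp (-x))| ≤ (1 + exp 3) * (x * |L|) / q := by
    rw [abs_sub_comm]
    calc |corrFactor m (exp (-x)) - 1| ≤ |x * L / q| * (1 + corrFactor m (exp (-x))) := by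
          rw [hc]; exact abs_exp_sub_one_le_mul_one_add_exp _
      _ ≤ |x * L / q| * (1 + exp 3) := by gcongr
      _ = (1 + exp 3) * (x * |L|) / q := by
          rw [abs_div, abs_mul, abs_of_pos hx0, abs_of_pos hq0]; ring
  have hxtL : x * exp (-x) * |L| ≤ (1 - exp (-x)) * (2 + log q) := by
    have h1 := mul_exp_neg_le_one_sub_exp_neg x
    have h2 := sq_mul_exp_neg_le hx0.le
    have hlq := log_nonneg hq
    calc x * exp (-x) * |L| ≤ x * exp (-x) * (1 + log q / 2 + x / 2) := by gcongr
      _ = x * exp (-x) * (1 + log q / 2) + x ^ 2 * exp (-x) / 2 := by ring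
      _ ≤ (1 - exp (-x)) * (1 + log q / 2) + (1 - exp (-x)) := by gcongr; linarith
      _ ≤ (1 - exp (-x)) * (2 + log q) := by nlinarith
  have hsub : (1 - exp (-x) * corrFactor m (exp (-x))) / (1 - exp (-x)) - 1
      = exp (-x) * (1 - corrFactor m (exp (-x))) / (1 - exp (-x)) := by
    field_simp; ring
  rw [hsub, abs_div, abs_mul, abs_of_pos (exp_pos _), abs_of_pos ht', div_le_iff₀ ht']
  calc exp (-x) * |1 - corrFactor m (exp (-x))|
      ≤ exp (-x) * ((1 + exp 3) * (x * |L|) / q) := by gcongr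
    _ = (1 + exp 3) * (x * exp (-x) * |L|) / q := by ring
    _ ≤ (1 + exp 3) * ((1 - exp (-x)) * (2 + log q)) / q := by gcongr
    _ = (1 + exp 3) * (2 + log q) / q * (1 - exp (-x)) := by ring

end corrFactor

/-- The common error bound of the four quantities, with `q = log p`. -/
noncomputable def convergenceRate (q : ℝ) : ℝ := (1 + exp 3) * (2 + log q) / q

theorem tendsto_convergenceRate_atTop : Tendsto convergenceRate atTop (𝓝 0) := by
  have h : Tendsto (fun q : ℝ => 2 / q + log q / q) atTop (𝓝 0) := by
    simpa using (tendsto_const_nhds.div_atTop tendsto_id).add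
      isLittleO_log_id_atTop.tendsto_div_nhds_zero
  simpa only [mul_zero] using (h.const_mul (1 + exp 3)).congr fun q => by
    rw [convergenceRate]; ring

theorem corrFactor_estimates {m q : ℝ} (hm : 1 / 2 ≤ m) (hq : 1 ≤ q)
    (hrate : convergenceRate q ≤ 1 / 2) :
    |corrFactor m (exp (-(q / m))) / (m * betaFun (1 / 2) m) ^ m⁻¹ - 1| ≤ convergenceRate q ∧
    |m⁻¹ * exp (-(q / m)) * corrFactor m (exp (-(q / m)))| ≤ convergenceRate q ∧
    |(1 - exp (-(q / m)) * corrFactor m (exp (-(q / m)))) / (1 - exp (-(q / m))) - 1|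
      ≤ convergenceRate q ∧
    |m⁻¹ * exp (-(q / m)) * corrFactor m (exp (-(q / m))) /
      (1 - exp (-(q / m)) * corrFactor m (exp (-(q / m))))| ≤ convergenceRate q := by
  set t := exp (-(q / m))
  set c := corrFactor m t
  have hm0 : 0 < m := by linarith
  have hq0 : 0 < q := by linarith
  have ht : t < 1 := exp_lt_one_iff.2 (neg_lt_zero.2 (div_pos hq0 hm0))
  have ht' : 0 < 1 - t := by linarith
  have hb0 : 0 ≤ m⁻¹ * t * c := by
    have : 0 ≤ c := by rw [show c = _ from corrFactor_eq_exp hm0 ht]; positivity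
    positivity
  have hbt : m⁻¹ * t * c / (1 - t) ≤ exp 3 / q := inv_mul_mul_corrFactor_div_one_sub_le hm hq0
  have ha : |(1 - t * c) / (1 - t) - 1| ≤ convergenceRate q :=
    abs_one_sub_mul_corrFactor_div_sub_one_le hm hq
  have hdom : 2 * exp 3 / q ≤ convergenceRate q :=
    div_le_div_of_nonneg_right (by nlinarith [log_nonneg hq, exp_pos 3]) hq0.le
  have hinv : 1 / q ≤ convergenceRate q := by
    refine le_trans ?_ hdom; gcongr; nlinarith [add_one_le_exp 3]
  refine ⟨(abs_corrFactor_div_rpow_sub_one_le hm0 hq0).trans hinv, ?_, ha, ?_⟩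
  · rw [abs_of_nonneg hb0]
    calc m⁻¹ * t * c ≤ m⁻¹ * t * c / (1 - t) :=
          le_div_self hb0 ht' (by linarith [exp_pos (-(q / m))])
      _ ≤ exp 3 / q := hbt
      _ ≤ convergenceRate q := by
          refine le_trans ?_ hdom; gcongr; linarith [exp_pos 3]
  · have ha' : 1 / 2 ≤ (1 - t * c) / (1 - t) := by linarith [(abs_le.1 ha).1]
    have hsplit : m⁻¹ * t * c / (1 - t * c)
        = (m⁻¹ * t * c / (1 - t)) / ((1 - t * c) / (1 - t)) :=
      (div_div_div_cancel_right₀ ht'.ne' _ _).symm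
    rw [hsplit, abs_of_nonneg (div_nonneg (div_nonneg hb0 ht'.le) (by linarith))]
    calc m⁻¹ * t * c / (1 - t) / ((1 - t * c) / (1 - t)) ≤ (exp 3 / q) / (1 / 2) := by
          gcongr
      _ = 2 * exp 3 / q := by ring
      _ ≤ convergenceRate q := hdom

theorem rpow_neg_two_div_eq_exp {p : ℝ} (hp : 0 < p) (ν : ℝ) :
    p ^ (-2 / ν) = exp (-(log p / (ν / 2))) := by
  rw [rpow_def_of_pos hp]; congr 1; field_simp

theorem cCorr_eq_corrFactor {p : ℕ} (hp : 0 < p) (n : ℕ) :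
    cCorr p n = corrFactor (((n : ℝ) - 1) / 2) (exp (-(log p / (((n : ℝ) - 1) / 2)))) := by
  rw [cCorr, corrFactor, rpow_neg_two_div_eq_exp (Nat.cast_pos.2 hp), inv_div]

theorem constants_uniform_asymptotics :
    ∀ ε > 0, ∃ P : ℕ, ∀ p : ℕ, P ≤ p → ∀ n : ℕ, 2 ≤ n →
      |cCorr p n / ((((n:ℝ) - 1)/2) * betaFun (1/2) (((n:ℝ) - 1)/2)) ^ (2/((n:ℝ) - 1)) - 1| < ε ∧
      |bConst p n| < ε ∧
      |aConst p n / (1 - (p:ℝ) ^ (-2/((n:ℝ) - 1))) - 1| < ε ∧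
      |bConst p n / aConst p n| < ε := by
  intro ε hε
  have hlog : Tendsto (fun p : ℕ => log p) atTop atTop :=
    tendsto_log_atTop.comp tendsto_natCast_atTop_atTop
  obtain ⟨P, hP⟩ := eventually_atTop.1 <| (eventually_gt_atTop 0).and <|
    (hlog.eventually_ge_atTop 1).and <|
      hlog.eventually (tendsto_convergenceRate_atTop.eventually
        (gt_mem_nhds (lt_min hε one_half_pos)))
  refine ⟨P, fun p hp n hn => ?_⟩
  obtain ⟨hp0, hq, hrate⟩ := hP p hp
  have hm : 1 / 2 ≤ ((n : ℝ) - 1) / 2 := by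
    have : (2 : ℝ) ≤ n := by exact_mod_cast hn
    linarith
  obtain ⟨h1, h2, h3, h4⟩ := corrFactor_estimates hm hq (hrate.le.trans (min_le_right _ _))
  have hlt := hrate.trans_le (min_le_left _ _)
  rw [bConst, aConst, cCorr_eq_corrFactor hp0, rpow_neg_two_div_eq_exp (Nat.cast_pos.2 hp0),
    ← inv_div ((n : ℝ) - 1) 2]
  exact ⟨h1.trans_lt hlt, h2.trans_lt hlt, h3.trans_lt hlt, h4.trans_lt hlt⟩
end

section
/- Let X_1,…,X_p be i.i.d. Beta(1/2,(n-1)/2) random variables with n ≥ 2 fixed, and fix δ with 0 < δ < 1/2. Then P( max_j X_j < (1-δ)(1 - p^{-2/(n-1)}) ) ≤ exp( -p · P(X_1 > (1-δ)(1-p^{-2/(n-1)})) ), and p · P(X_1 > (1-δ)(1-p^{-2/(n-1)})) → ∞ as p → ∞; hence P( max_j X_j < (1-δ)(1-p^{-2/(n-1)}) ) → 0. -/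
/-!
By independence the maximum stays below `t` with probability `P(X ≤ t)^p ≤ (1 - P(X > t))^p
≤ exp (-p P(X > t))`. The thresholds `t_p = (1 - δ)(1 - p^(-2/(n-1)))` never exceed `1 - δ < 1`,
and the Beta law charges `(1 - δ, 1)`, so `p P(X > t_p) ≥ p P(X > 1 - δ) → ∞`; no finer
information on the tail of the Beta law is needed.
-/

open MeasureTheory ProbabilityTheory Real Set Filter

lemma betaMeasure_eq_withDensity_betaPDF (a b : ℝ) :
    _root_.betaMeasure a b = volume.withDensity (betaPDF a b) := by
  rw [_root_.betaMeasure, ← withDensity_indicator measurableSet_Ioo]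
  congr 1
  funext x
  by_cases hx : x ∈ Ioo 0 1
  · rw [indicator_of_mem hx, betaPDF_of_pos_lt_one hx.1 hx.2, betaFun, beta]
    ring_nf
  · simp [betaPDF_eq, show ¬(0 < x ∧ x < 1) from hx]

lemma isProbabilityMeasure_betaMeasure {a b : ℝ} (ha : 0 < a) (hb : 0 < b) :
    IsProbabilityMeasure (_root_.betaMeasure a b) := by
  rw [betaMeasure_eq_withDensity_betaPDF]
  exact isProbabilityMeasureBeta ha hb

lemma betaMeasure_Ioi_pos {a b : ℝ} (ha : 0 < a) (hb : 0 < b) {t : ℝ} (ht : t < 1) :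
    0 < _root_.betaMeasure a b (Ioi t) := by
  have hmeas : Measurable (betaPDF a b) := (measurable_betaPDFReal a b).ennreal_ofReal
  rw [betaMeasure_eq_withDensity_betaPDF, pos_iff_ne_zero, ne_eq, withDensity_apply_eq_zero hmeas]
  have hsub : Ioo (max t 0) 1 ⊆ {x | betaPDF a b x ≠ 0} ∩ Ioi t := fun x hx =>
    ⟨by simpa [betaPDF] using betaPDFReal_pos (lt_of_le_of_lt (le_max_right _ _) hx.1) hx.2 ha hb,
      lt_of_le_of_lt (le_max_left _ _) hx.1⟩
  refine fun h => (measure_mono_null hsub h).not_gt ?_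
  simpa [Real.volume_Ioo] using ht

lemma setOf_iSup_lt_eq_pi_Iio {ι α : Type*} [Finite ι] [Nonempty ι]
    [ConditionallyCompleteLinearOrder α] (t : α) :
    {y : ι → α | ⨆ j, y j < t} = univ.pi fun _ => Iio t := by
  ext y
  simp only [mem_ofPred_eq, mem_univ_pi, mem_Iio]
  refine ⟨fun h j => (le_ciSup (finite_range y).bddAbove j).trans_lt h, fun h => ?_⟩
  obtain ⟨j, hj⟩ := Finite.exists_max y
  exact (ciSup_le hj).trans_lt (h j)

section

variable {μ : Measure ℝ}

lemma measureReal_pi_iSup_lt_le_exp [IsProbabilityMeasure μ] (p : ℕ) (t : ℝ) :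
    (Measure.pi fun _ : Fin p => μ).real {y | ⨆ j, y j < t} ≤ exp (-p * μ.real (Ioi t)) := by
  rcases Nat.eq_zero_or_pos p with rfl | hp
  · simp [measureReal_le_one]
  have : Nonempty (Fin p) := Fin.pos_iff_nonempty.mp hp
  have hIio : μ.real (Iio t) ≤ exp (-μ.real (Ioi t)) := calc
    μ.real (Iio t) ≤ μ.real (Iic t) := measureReal_mono Iio_subset_Iic_self
    _ = 1 - μ.real (Ioi t) := by rw [← compl_Ioi, probReal_compl_eq_one_sub measurableSet_Ioi]
    _ ≤ exp (-μ.real (Ioi t)) := by linarith [add_one_le_exp (-μ.real (Ioi t))]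
  calc (Measure.pi fun _ : Fin p => μ).real {y | ⨆ j, y j < t}
      = μ.real (Iio t) ^ p := by
        simp [setOf_iSup_lt_eq_pi_Iio, measureReal_def, Measure.pi_pi]
    _ ≤ exp (-μ.real (Ioi t)) ^ p := pow_le_pow_left₀ measureReal_nonneg hIio p
    _ = exp (-p * μ.real (Ioi t)) := by rw [← exp_nat_mul]; ring_nf

lemma tendsto_natCast_mul_measureReal_Ioi_atTop [IsFiniteMeasure μ] {s : ℝ} (hs : μ (Ioi s) ≠ 0)
    {t : ℕ → ℝ} (ht : ∀ p, t p ≤ s) :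
    Tendsto (fun p : ℕ => (p : ℝ) * μ.real (Ioi (t p))) atTop atTop := by
  have hpos : 0 < μ.real (Ioi s) := ENNReal.toReal_pos hs (measure_ne_top μ _)
  refine tendsto_atTop_mono (fun p => ?_) (tendsto_natCast_atTop_atTop.atTop_mul_const hpos)
  exact mul_le_mul_of_nonneg_left (measureReal_mono (Ioi_subset_Ioi (ht p))) p.cast_nonneg

end

theorem beta_max_lower_tail (n : ℕ) (hn : 2 ≤ n) (δ : ℝ) (hδ0 : 0 < δ) (hδ1 : δ < 1/2) :
    (∀ p : ℕ,
        ((Measure.pi fun _ : Fin p => _root_.betaMeasure (1/2) (((n:ℝ) - 1)/2))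
            {y | (⨆ j, y j) < (1 - δ) * (1 - (p:ℝ) ^ (-2/((n:ℝ) - 1)))}).toReal
          ≤ Real.exp (-(p:ℝ) *
              ((_root_.betaMeasure (1/2) (((n:ℝ) - 1)/2))
                {x | (1 - δ) * (1 - (p:ℝ) ^ (-2/((n:ℝ) - 1))) < x}).toReal)) ∧
    Tendsto (fun p : ℕ => (p:ℝ) *
        ((_root_.betaMeasure (1/2) (((n:ℝ) - 1)/2))
          {x | (1 - δ) * (1 - (p:ℝ) ^ (-2/((n:ℝ) - 1))) < x}).toReal) atTop atTop ∧
    Tendsto (fun p : ℕ =>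
        ((Measure.pi fun _ : Fin p => _root_.betaMeasure (1/2) (((n:ℝ) - 1)/2))
          {y | (⨆ j, y j) < (1 - δ) * (1 - (p:ℝ) ^ (-2/((n:ℝ) - 1)))}).toReal)
      atTop (nhds 0) := by
  have hb : (0:ℝ) < ((n:ℝ) - 1) / 2 := by
    have : (2:ℝ) ≤ n := by exact_mod_cast hn
    linarith
  set μ := _root_.betaMeasure (1/2) (((n:ℝ) - 1)/2)
  have : IsProbabilityMeasure μ := isProbabilityMeasure_betaMeasure one_half_pos hb
  set t : ℕ → ℝ := fun p => (1 - δ) * (1 - (p:ℝ) ^ (-2/((n:ℝ) - 1)))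
  have ht : ∀ p, t p ≤ 1 - δ := fun p =>
    mul_le_of_le_one_right (by linarith) (by simp only [sub_le_self_iff]; positivity)
  have hbound := fun p => measureReal_pi_iSup_lt_le_exp (μ := μ) p (t p)
  have hgrowth := tendsto_natCast_mul_measureReal_Ioi_atTop
    (betaMeasure_Ioi_pos one_half_pos hb (by linarith : 1 - δ < 1)).ne' ht
  have hexp := tendsto_exp_neg_atTop_nhds_zero.comp hgrowth
  refine ⟨hbound, hgrowth, squeeze_zero (fun _ => ENNReal.toReal_nonneg) hbound ?_⟩
  simpa only [Function.comp_def, neg_mul] using hexp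
end
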